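/- Let W ⊆ V be a subspace with inclusion ι : W ↪ V, and for a subspace L ⊆ V ⊕ V* define its pullback ι*L := {(X, ξ∘ι) ∈ W ⊕ W* : (X, ξ) ∈ L and X ∈ W}. If L is Lagrangian in V ⊕ V* (L = L^⊥ for the canonical pairing), then ι*L is Lagrangian in W ⊕ W* with respect to the canonical pairing ⟨(X,α),(Y,β)⟩ = ½(α(Y) + β(X)) on W ⊕ W*. -/

import Mathlib

/-- The canonical symmetric pairing on `V ⊕ V*`:
`⟨(X,ξ),(Y,η)⟩ = ½ (ξ(Y) + η(X))`. -/
noncomputable def pairVD (V : Type*) [AddCommGroup V] [Module ℝ V] :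
    (V × Module.Dual ℝ V) →ₗ[ℝ] (V × Module.Dual ℝ V) →ₗ[ℝ] ℝ :=
  LinearMap.mk₂ ℝ (fun p q => (p.2 q.1 + q.2 p.1) / 2)
    (by intro m m' n; simp; ring)
    (by intro c m n; simp; ring)
    (by intro m n n'; simp; ring)
    (by intro c m n; simp; ring)

/-- The orthogonal of a subspace of `V ⊕ V*` with respect to the canonical pairing. -/
noncomputable def perpVD {V : Type*} [AddCommGroup V] [Module ℝ V]
    (A : Submodule ℝ (V × Module.Dual ℝ V)) : Submodule ℝ (V × Module.Dual ℝ V) where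
  carrier := {e | ∀ a ∈ A, pairVD V e a = 0}
  add_mem' := by
    intro x y hx hy a ha
    simp only [Set.mem_setOf_eq] at *
    rw [map_add, LinearMap.add_apply, hx a ha, hy a ha, add_zero]
  zero_mem' := by
    intro a ha
    simp
  smul_mem' := by
    intro c x hx a ha
    simp only [Set.mem_setOf_eq] at *
    rw [map_smul, LinearMap.smul_apply, hx a ha, smul_zero]

/-- The pullback of a subspace `L ⊆ V ⊕ V*` to a subspace `W ⊆ V`:
`ι*L := {(X, ξ∘ι) ∈ W ⊕ W* : (X, ξ) ∈ L, X ∈ W}` where `ι : W ↪ V` is the inclusion. -/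
def pullbackVD {V : Type*} [AddCommGroup V] [Module ℝ V]
    (W : Submodule ℝ V) (L : Submodule ℝ (V × Module.Dual ℝ V)) :
    Set (W × Module.Dual ℝ W) :=
  {p | ∃ ξ : Module.Dual ℝ V, ((p.1 : V), ξ) ∈ L ∧ p.2 = ξ.comp W.subtype}

/-!
The pairing of two elements of `ι*L` is the pairing in `V ⊕ V*` of any lifts of them to
`L ∩ (W ⊕ V*)`, so `ι*L` is isotropic. Conversely, if `(X, α)` is orthogonal to `ι*L`, extend
`α` to `η ∈ V*`: then `(X, η)` is orthogonal to `L ∩ (W ⊕ V*)`, whose orthogonal is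
`L^⊥ + (W ⊕ V*)^⊥ = L + (0 ⊕ ann W)`. Hence `(X, η) = (X, ξ) + (0, ζ)` with `(X, ξ) ∈ L` and
`ζ` vanishing on `W`, so `α = ξ ∘ ι` and `(X, α) ∈ ι*L`.
-/

section Pairing

variable {V : Type*} [AddCommGroup V] [Module ℝ V]

theorem pairVD_apply (a b : V × Module.Dual ℝ V) :
    pairVD V a b = (a.2 b.1 + b.2 a.1) / 2 :=
  rfl

theorem pairVD_comm (a b : V × Module.Dual ℝ V) : pairVD V a b = pairVD V b a := by
  simp only [pairVD_apply]
  ring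

theorem pairVD_isRefl : LinearMap.BilinForm.IsRefl (pairVD V) := fun a b h => by
  rwa [pairVD_comm]

theorem pairVD_restrict (W : Submodule ℝ V) (x y : W) (ξ η : Module.Dual ℝ V) :
    pairVD W (x, ξ.comp W.subtype) (y, η.comp W.subtype) = pairVD V (x, ξ) (y, η) :=
  rfl

theorem mem_perpVD {A : Submodule ℝ (V × Module.Dual ℝ V)} {e : V × Module.Dual ℝ V} :
    e ∈ perpVD A ↔ ∀ a ∈ A, pairVD V e a = 0 :=
  Iff.rfl

theorem perpVD_eq_orthogonal (A : Submodule ℝ (V × Module.Dual ℝ V)) :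
    perpVD A = LinearMap.BilinForm.orthogonal (pairVD V) A := by
  ext e
  rw [mem_perpVD, LinearMap.BilinForm.mem_orthogonal_iff]
  exact forall₂_congr fun a _ => by rw [pairVD_comm]

theorem pairVD_nondegenerate : LinearMap.BilinForm.Nondegenerate (pairVD V) := by
  refine (LinearMap.IsRefl.nondegenerate_iff_separatingLeft (B := pairVD V) pairVD_isRefl).mpr
    fun e he => ?_
  have h₂ : e.2 = 0 := LinearMap.ext fun y => by
    simpa [pairVD_apply] using he (y, 0)
  have h₁ : e.1 = 0 := (Module.forall_dual_apply_eq_zero_iff ℝ e.1).mp fun φ => by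
    simpa [pairVD_apply, h₂] using he (0, φ)
  exact Prod.ext h₁ h₂

theorem perpVD_perpVD [FiniteDimensional ℝ V] (A : Submodule ℝ (V × Module.Dual ℝ V)) :
    perpVD (perpVD A) = A := by
  rw [perpVD_eq_orthogonal, perpVD_eq_orthogonal]
  exact LinearMap.BilinForm.orthogonal_orthogonal pairVD_nondegenerate pairVD_isRefl A

theorem perpVD_sup (M N : Submodule ℝ (V × Module.Dual ℝ V)) :
    perpVD (M ⊔ N) = perpVD M ⊓ perpVD N := by
  ext e
  simp only [mem_perpVD, Submodule.mem_inf]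
  constructor
  · intro h
    exact ⟨fun a ha => h a (Submodule.mem_sup_left ha),
      fun a ha => h a (Submodule.mem_sup_right ha)⟩
  · rintro ⟨hM, hN⟩ a ha
    obtain ⟨m, hm, n, hn, rfl⟩ := Submodule.mem_sup.mp ha
    rw [map_add, hM m hm, hN n hn, add_zero]

theorem perpVD_inf [FiniteDimensional ℝ V] (M N : Submodule ℝ (V × Module.Dual ℝ V)) :
    perpVD (M ⊓ N) = perpVD M ⊔ perpVD N := by
  rw [← perpVD_perpVD (perpVD M ⊔ perpVD N), perpVD_sup, perpVD_perpVD, perpVD_perpVD]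

theorem mem_perpVD_prod_top {W : Submodule ℝ V} {c : V × Module.Dual ℝ V} :
    c ∈ perpVD (W.prod ⊤) ↔ c.1 = 0 ∧ ∀ w ∈ W, c.2 w = 0 := by
  constructor
  · intro hc
    refine ⟨(Module.forall_dual_apply_eq_zero_iff ℝ c.1).mp fun φ => ?_, fun w hw => ?_⟩
    · simpa [pairVD_apply] using hc (0, φ) ⟨W.zero_mem, trivial⟩
    · simpa [pairVD_apply] using hc (w, 0) ⟨hw, trivial⟩
  · rintro ⟨h₁, h₂⟩ a ⟨ha, -⟩
    simp [pairVD_apply, h₁, h₂ _ ha]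

end Pairing

section Pullback

variable {V : Type*} [AddCommGroup V] [Module ℝ V] (W : Submodule ℝ V)
  {L : Submodule ℝ (V × Module.Dual ℝ V)}

theorem pairVD_eq_zero_of_mem_pullbackVD (hL : L ≤ perpVD L) {p q : W × Module.Dual ℝ W}
    (hq : q ∈ pullbackVD W L) (hp : p ∈ pullbackVD W L) : pairVD W q p = 0 := by
  obtain ⟨x, α⟩ := q
  obtain ⟨y, β⟩ := p
  obtain ⟨ξ, hξ, rfl⟩ := hq
  obtain ⟨η, hη, rfl⟩ := hp
  rw [pairVD_restrict]
  exact hL hξ _ hη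

theorem mem_pullbackVD_of_forall_pairVD_eq_zero [FiniteDimensional ℝ V] (hL : perpVD L ≤ L)
    {q : W × Module.Dual ℝ W} (hq : ∀ p ∈ pullbackVD W L, pairVD W q p = 0) :
    q ∈ pullbackVD W L := by
  obtain ⟨x, α⟩ := q
  obtain ⟨η, rfl⟩ := LinearMap.exists_extend α
  have hperp : ((x : V), η) ∈ perpVD (L ⊓ W.prod ⊤) := by
    rintro ⟨y, ζ⟩ ⟨hy, hyW, -⟩
    simpa only [pairVD_restrict] using hq (⟨y, hyW⟩, ζ.comp W.subtype) ⟨ζ, hy, rfl⟩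
  rw [perpVD_inf, Submodule.mem_sup] at hperp
  obtain ⟨⟨x', ξ⟩, hξ, c, hc, hsum⟩ := hperp
  obtain ⟨hc₁, hc₂⟩ := mem_perpVD_prod_top.mp hc
  obtain ⟨rfl, rfl⟩ : x' = x ∧ ξ + c.2 = η := by simpa [Prod.ext_iff, hc₁] using hsum
  refine ⟨ξ, hL hξ, LinearMap.ext fun w => ?_⟩
  simp [hc₂ w w.2]

end Pullback

/-- If `L` is Lagrangian in `V ⊕ V*`, then its pullback `ι*L` to a
subspace `W ⊆ V` equals its own orthogonal with respect to the canonical pairing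
`⟨(X,α),(Y,β)⟩ = ½(α(Y) + β(X))` on `W ⊕ W*`, i.e. `ι*L` is Lagrangian in `W ⊕ W*`. -/
theorem pullback_of_lagrangian_is_lagrangian
    {V : Type*} [AddCommGroup V] [Module ℝ V] [FiniteDimensional ℝ V]
    (W : Submodule ℝ V) (L : Submodule ℝ (V × Module.Dual ℝ V))
    (hL : perpVD L = L) :
    pullbackVD W L =
      {q : W × Module.Dual ℝ W | ∀ p ∈ pullbackVD W L, pairVD W q p = 0} := by
  ext q
  exact ⟨fun hq _ hp => pairVD_eq_zero_of_mem_pullbackVD W hL.ge hq hp,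
    mem_pullbackVD_of_forall_pairVD_eq_zero W hL.le⟩
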